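/- arXiv:1305.0666 — 4 statements merged into one kernel-verified Lean document; each statement's English description precedes it below -/
import Mathlib

section
/- The solution (Y_k)_{k∈ℤ} of the recursion Y_{k+1}·Y_{k-1} = 2(2k+1)·Y_k² with initial conditions Y_0 = Y_1 = 1 is given explicitly by Y_k = ∏_{j=1}^k (2j−1)!/(j−1)! for k ≥ 0, and Y_k = (−1)^{k(k+1)/2}/2^{2k+1} · ∏_{j=1}^{−k−1} (2j−1)!/(j−1)! for k < 0. -/
open Finset

/-!
Write `Y_{k+1} Y_{k-1} = c_k Y_k²` as a recurrence on `ℕ` in each direction: `n ↦ Y_n` has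
`c_n = 2(2n+3)` and `n ↦ Y_{-n-1}` has `c_n = -2(2n+3)`. A nowhere-vanishing solution of such a
recurrence is determined by its first two terms, and solutions multiply with their coefficients.
The product `F_n = ∏_{j<n} (2j+1)!/j!` has coefficient `2(2n+3)`, the sign `(-1)^{n(n+1)/2}` has
coefficient `-1` and `2^{2n+1}` has coefficient `1`; comparing initial values gives both formulas.
-/

def SquareRecurrence {M : Type*} [Monoid M] (c a : ℕ → M) : Prop :=
  ∀ n, a (n + 2) * a n = c n * a (n + 1) ^ 2

namespace SquareRecurrence

theorem eq {M : Type*} [MonoidWithZero M] [IsRightCancelMulZero M] {c a b : ℕ → M}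
    (ha : SquareRecurrence c a) (hb : SquareRecurrence c b) (hb0 : ∀ n, b n ≠ 0)
    (h0 : a 0 = b 0) (h1 : a 1 = b 1) : a = b := by
  funext n
  induction n using Nat.twoStepInduction with
  | zero => exact h0
  | one => exact h1
  | more n hn hn1 =>
    refine mul_right_cancel₀ (hb0 n) ?_
    rw [hb n, ← hn1, ← ha n, hn]

theorem mul {M : Type*} [CommMonoid M] {c d a b : ℕ → M}
    (ha : SquareRecurrence c a) (hb : SquareRecurrence d b) :
    SquareRecurrence (c * d) (a * b) := fun n => by
  simp only [Pi.mul_apply]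
  rw [mul_mul_mul_comm, ha n, hb n, mul_pow, mul_mul_mul_comm]

end SquareRecurrence

theorem squareRecurrence_pow {M : Type*} [Monoid M] (x : M) (m k : ℕ) :
    SquareRecurrence 1 (fun n => x ^ (m * n + k)) := fun n => by
  rw [Pi.one_apply, one_mul, ← pow_add, ← pow_mul]
  congr 1
  ring

theorem squareRecurrence_neg_one_pow_triangle {R : Type*} [Monoid R] [HasDistribNeg R] :
    SquareRecurrence (fun _ => -1) (fun n => (-1 : R) ^ ((n + 1) * n / 2)) := by
  have triangle_succ (n : ℕ) : (n + 2) * (n + 1) / 2 = (n + 1) * n / 2 + (n + 1) := by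
    rw [show (n + 2) * (n + 1) = (n + 1) * n + 2 * (n + 1) by ring]
    omega
  have neg_one_pow_two_mul (m : ℕ) : (-1 : R) ^ (2 * m) = 1 := by
    rw [pow_mul, neg_one_sq, one_pow]
  intro n
  simp only [triangle_succ, ← pow_mul, ← pow_add]
  rw [mul_comm _ 2, neg_one_pow_two_mul, mul_one,
    show (n + 1) * n / 2 + (n + 1) + (n + 1 + 1) + (n + 1) * n / 2 =
      2 * ((n + 1) * n / 2 + (n + 1)) + 1 by ring, pow_succ, neg_one_pow_two_mul, one_mul]

/-- The paper's `∏_{j=1}^n (2j-1)!/(j-1)!`, reindexed from `0`. -/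
noncomputable def factorialRatioProd (K : Type*) [Field K] (n : ℕ) : K :=
  ∏ j ∈ range n, ((2 * j + 1).factorial : K) / (j.factorial : K)

theorem factorialRatioProd_ne_zero (K : Type*) [Field K] [CharZero K] (n : ℕ) :
    factorialRatioProd K n ≠ 0 :=
  prod_ne_zero_iff.mpr fun _ _ =>
    div_ne_zero (Nat.cast_ne_zero.mpr (Nat.factorial_ne_zero _))
      (Nat.cast_ne_zero.mpr (Nat.factorial_ne_zero _))

theorem two_mul_add_one_factorial_div_factorial_succ {K : Type*} [Field K] [CharZero K] (n : ℕ) :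
    ((2 * (n + 1) + 1).factorial : K) / ((n + 1).factorial : K) =
      2 * (2 * n + 3) * (((2 * n + 1).factorial : K) / (n.factorial : K)) := by
  rw [show 2 * (n + 1) + 1 = 2 * n + 1 + 1 + 1 by ring, Nat.factorial_succ (2 * n + 1 + 1),
    Nat.factorial_succ (2 * n + 1), Nat.factorial_succ n]
  push_cast
  field_simp
  ring

theorem squareRecurrence_factorialRatioProd (K : Type*) [Field K] [CharZero K] :
    SquareRecurrence (fun n => 2 * (2 * (n : K) + 3)) (factorialRatioProd K) := fun n => by
  simp only [factorialRatioProd, prod_range_succ, two_mul_add_one_factorial_div_factorial_succ]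
  ring

theorem squareRecurrence_signed_factorialRatioProd (K : Type*) [Field K] [CharZero K] :
    SquareRecurrence (fun n => -(2 * (2 * (n : K) + 3)))
      (fun n => (-1 : K) ^ ((n + 1) * n / 2) * 2 ^ (2 * n + 1) * factorialRatioProd K n) :=
  fun n => by
    have h := (squareRecurrence_neg_one_pow_triangle.mul (squareRecurrence_pow (2 : K) 2 1)).mul
      (squareRecurrence_factorialRatioProd K) n
    simp only [Pi.mul_apply, Pi.one_apply] at h
    linear_combination h

theorem recursion_Y_explicit_general (Y : ℤ → ℚ) (h0 : Y 0 = 1) (h1 : Y 1 = 1)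
    (hrec : ∀ k : ℤ, Y (k + 1) * Y (k - 1) = 2 * (2 * (k : ℚ) + 1) * (Y k) ^ 2) :
    (∀ n : ℕ, Y (n : ℤ) = ∏ j ∈ Finset.range n, ((2 * j + 1).factorial : ℚ) / (j.factorial : ℚ)) ∧
    (∀ n : ℕ, Y (-(n : ℤ) - 1) =
      (-1 : ℚ) ^ ((n + 1) * n / 2) / (2 : ℚ) ^ (2 * (-(n : ℤ) - 1) + 1) *
        ∏ j ∈ Finset.range n, ((2 * j + 1).factorial : ℚ) / (j.factorial : ℚ)) := by
  have hpos : SquareRecurrence (fun n => 2 * (2 * (n : ℚ) + 3)) (fun n : ℕ => Y n) :=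
    fun n => by convert hrec (n + 1) using 2 <;> push_cast <;> ring_nf
  have hneg : SquareRecurrence (fun n => -(2 * (2 * (n : ℚ) + 3))) (fun n : ℕ => Y (-n - 1)) :=
    fun n => by
      rw [mul_comm]
      convert hrec (-n - 2) using 2 <;> push_cast <;> ring_nf
  have hY_neg_one : Y (-1) = 2 := by simpa [h0, h1] using hrec 0
  have hY_neg_two : Y (-2) = -8 := by
    have := hrec (-1)
    norm_num [h0, hY_neg_one] at this
    linarith
  have hY_pos : (fun n : ℕ => Y n) = factorialRatioProd ℚ :=
    hpos.eq (squareRecurrence_factorialRatioProd ℚ) (factorialRatioProd_ne_zero ℚ)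
      (by simp [h0, factorialRatioProd]) (by simp [h1, factorialRatioProd])
  have hY_neg : (fun n : ℕ => Y (-n - 1)) =
      fun n => (-1 : ℚ) ^ ((n + 1) * n / 2) * 2 ^ (2 * n + 1) * factorialRatioProd ℚ n :=
    hneg.eq (squareRecurrence_signed_factorialRatioProd ℚ)
      (fun n => by simp [factorialRatioProd_ne_zero])
      (by simp [hY_neg_one, factorialRatioProd]) (by norm_num [hY_neg_two, factorialRatioProd])
  refine ⟨fun n => congrFun hY_pos n, fun n => ?_⟩
  rw [congrFun hY_neg n,
    show 2 * (-(n : ℤ) - 1) + 1 = -((2 * n + 1 : ℕ) : ℤ) by push_cast; ring, zpow_neg,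
    zpow_natCast, div_inv_eq_mul]
  rfl

/-- Explicit solution of the recursion `Y_{k+1} Y_{k-1} = 2(2k+1) Y_k²`, `Y_0 = Y_1 = 1`. -/
theorem recursion_Y_explicit (Y : ℤ → ℚ) (h0 : Y 0 = 1) (h1 : Y 1 = 1)
    (hne : ∀ k : ℤ, Y k ≠ 0)
    (hrec : ∀ k : ℤ, Y (k + 1) * Y (k - 1) = 2 * (2 * (k : ℚ) + 1) * (Y k) ^ 2) :
    (∀ n : ℕ, Y (n : ℤ) = ∏ j ∈ Finset.range n, ((2 * j + 1).factorial : ℚ) / (j.factorial : ℚ)) ∧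
    (∀ n : ℕ, Y (-(n : ℤ) - 1) =
      (-1 : ℚ) ^ ((n + 1) * n / 2) / (2 : ℚ) ^ (2 * (-(n : ℤ) - 1) + 1) *
        ∏ j ∈ Finset.range n, ((2 * j + 1).factorial : ℚ) / (j.factorial : ℚ)) :=
  recursion_Y_explicit_general Y h0 h1 hrec
end

section
/- Define φ_n(x) = ₂F₁(−n/2, −(n−1)/2; n+3/2; x) and ψ_n(x) = ₃F₂(−n/2, −(n+1)/2, (n+5)/4; n+3/2, (n+1)/4; x) (both terminating, hence polynomials). Then for all n ≥ 0, 3(3n+4)(3n+7)/((2n+3)(2n+5)) · x · φ_{n+2}(x) = (3x+1)·ψ_{n+1}(x) − (x−1)²·φ_n(x). -/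
open Finset

/-- The terminating hypergeometric polynomial `φ_n(x) = ₂F₁(-n/2, -(n-1)/2; n+3/2; x)`. -/
noncomputable def phiHyp (n : ℕ) (x : ℝ) : ℝ :=
  ∑ k ∈ Finset.range (n + 2),
    ((ascPochhammer ℝ k).eval (-(n : ℝ) / 2) * (ascPochhammer ℝ k).eval (-((n : ℝ) - 1) / 2))
      / ((ascPochhammer ℝ k).eval ((n : ℝ) + 3 / 2) * (k.factorial : ℝ)) * x ^ k

/-- The terminating hypergeometric polynomial
`ψ_n(x) = ₃F₂(-n/2, -(n+1)/2, (n+5)/4; n+3/2, (n+1)/4; x)`. -/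
noncomputable def psiHyp (n : ℕ) (x : ℝ) : ℝ :=
  ∑ k ∈ Finset.range (n + 2),
    ((ascPochhammer ℝ k).eval (-(n : ℝ) / 2) * (ascPochhammer ℝ k).eval (-((n : ℝ) + 1) / 2) *
        (ascPochhammer ℝ k).eval (((n : ℝ) + 5) / 4))
      / ((ascPochhammer ℝ k).eval ((n : ℝ) + 3 / 2) *
          (ascPochhammer ℝ k).eval (((n : ℝ) + 1) / 4) * (k.factorial : ℝ)) * x ^ k

section Aux
open Polynomial

noncomputable def Aco (n k : ℕ) : ℝ :=
  ((ascPochhammer ℝ k).eval (-(n : ℝ) / 2) * (ascPochhammer ℝ k).eval (-((n : ℝ) - 1) / 2))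
    / ((ascPochhammer ℝ k).eval ((n : ℝ) + 3 / 2) * (k.factorial : ℝ))

noncomputable def Bco (n k : ℕ) : ℝ :=
  ((ascPochhammer ℝ k).eval (-(n : ℝ) / 2) * (ascPochhammer ℝ k).eval (-((n : ℝ) + 1) / 2) *
      (ascPochhammer ℝ k).eval (((n : ℝ) + 5) / 4))
    / ((ascPochhammer ℝ k).eval ((n : ℝ) + 3 / 2) *
        (ascPochhammer ℝ k).eval (((n : ℝ) + 1) / 4) * (k.factorial : ℝ))


lemma pe_left (j : ℕ) (x : ℝ) :
    (ascPochhammer ℝ (j+1)).eval x = x * (ascPochhammer ℝ j).eval (x+1) := by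
  rw [ascPochhammer_succ_left]
  simp [Polynomial.eval_comp]

lemma pe2 (j : ℕ) (x : ℝ) :
    (ascPochhammer ℝ (j+2)).eval x
      = (ascPochhammer ℝ j).eval x * (x + j) * (x + j + 1) := by
  rw [show j+2 = (j+1)+1 from rfl, ascPochhammer_succ_eval, ascPochhammer_succ_eval]
  push_cast; ring

set_option maxHeartbeats 3000000 in
lemma keylem (n m : ℕ) :
    3 * (3 * (n : ℝ) + 4) * (3 * (n : ℝ) + 7) / ((2 * (n : ℝ) + 3) * (2 * (n : ℝ) + 5)) *
        Aco (n+2) (m+1) + Aco n m - 2 * Aco n (m+1) + Aco n (m+2)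
      = 3 * Bco (n+1) (m+1) + Bco (n+1) (m+2) := by
  have hn : (0:ℝ) ≤ (n:ℝ) := Nat.cast_nonneg n
  have hm : (0:ℝ) ≤ (m:ℝ) := Nat.cast_nonneg m
  have h1 : (ascPochhammer ℝ (m+1)).eval (-((n:ℝ)+2)/2)
      = (-((n:ℝ)+2)/2) * (ascPochhammer ℝ m).eval (-(n:ℝ)/2) := by
    rw [pe_left, show (-((n:ℝ)+2)/2 + 1) = -(n:ℝ)/2 by ring]
  have h2a : (ascPochhammer ℝ (m+1)).eval (-((n:ℝ)+1+1)/2)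
      = (-((n:ℝ)+2)/2) * (ascPochhammer ℝ m).eval (-(n:ℝ)/2) := by
    rw [pe_left, show (-((n:ℝ)+1+1)/2 + 1) = -(n:ℝ)/2 by ring,
      show (-((n:ℝ)+1+1)/2) = -((n:ℝ)+2)/2 by ring]
  have h2b : (ascPochhammer ℝ (m+2)).eval (-((n:ℝ)+1+1)/2)
      = (-((n:ℝ)+2)/2) * (ascPochhammer ℝ m).eval (-(n:ℝ)/2) * (-(n:ℝ)/2 + m) := by
    rw [show m+2 = (m+1)+1 from rfl, pe_left,
      show (-((n:ℝ)+1+1)/2 + 1) = -(n:ℝ)/2 by ring, ascPochhammer_succ_eval,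
      show (-((n:ℝ)+1+1)/2) = -((n:ℝ)+2)/2 by ring]
    ring
  have h3 : (ascPochhammer ℝ (m+1)).eval (-(n:ℝ)/2)
      = (ascPochhammer ℝ m).eval (-(n:ℝ)/2) * (-(n:ℝ)/2 + m) :=
    ascPochhammer_succ_eval m _
  have h4 : (ascPochhammer ℝ (m+2)).eval (-(n:ℝ)/2)
      = (ascPochhammer ℝ m).eval (-(n:ℝ)/2) * (-(n:ℝ)/2 + m) * (-(n:ℝ)/2 + m + 1) :=
    pe2 m _
  have h5 : (ascPochhammer ℝ (m+1)).eval (-((n:ℝ)+2-1)/2)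
      = (-((n:ℝ)+1)/2) * (ascPochhammer ℝ m).eval (-((n:ℝ)-1)/2) := by
    rw [show (-((n:ℝ)+2-1)/2) = -((n:ℝ)+1)/2 by ring, pe_left,
      show (-((n:ℝ)+1)/2 + 1) = -((n:ℝ)-1)/2 by ring]
  have h6 : (ascPochhammer ℝ (m+1)).eval (-((n:ℝ)+1)/2)
      = (-((n:ℝ)+1)/2) * (ascPochhammer ℝ m).eval (-((n:ℝ)-1)/2) := by
    rw [pe_left, show (-((n:ℝ)+1)/2 + 1) = -((n:ℝ)-1)/2 by ring]
  have h7 : (ascPochhammer ℝ (m+2)).eval (-((n:ℝ)+1)/2)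
      = (-((n:ℝ)+1)/2) * (ascPochhammer ℝ m).eval (-((n:ℝ)-1)/2) * (-((n:ℝ)-1)/2 + m) := by
    rw [show m+2 = (m+1)+1 from rfl, pe_left,
      show (-((n:ℝ)+1)/2 + 1) = -((n:ℝ)-1)/2 by ring, ascPochhammer_succ_eval]
    ring
  have h8 : (ascPochhammer ℝ (m+1)).eval (-((n:ℝ)-1)/2)
      = (ascPochhammer ℝ m).eval (-((n:ℝ)-1)/2) * (-((n:ℝ)-1)/2 + m) :=
    ascPochhammer_succ_eval m _
  have h9 : (ascPochhammer ℝ (m+2)).eval (-((n:ℝ)-1)/2)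
      = (ascPochhammer ℝ m).eval (-((n:ℝ)-1)/2) * (-((n:ℝ)-1)/2 + m) * (-((n:ℝ)-1)/2 + m + 1) :=
    pe2 m _
  -- denominator family c = n + 3/2, base D = eval (m+2)
  have h10 : (ascPochhammer ℝ m).eval ((n:ℝ)+3/2)
      = (ascPochhammer ℝ (m+2)).eval ((n:ℝ)+3/2) / (((n:ℝ)+3/2+m) * ((n:ℝ)+3/2+m+1)) := by
    rw [eq_div_iff (by positivity)]
    linear_combination -(pe2 m ((n:ℝ)+3/2))
  have h11 : (ascPochhammer ℝ (m+1)).eval ((n:ℝ)+3/2)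
      = (ascPochhammer ℝ (m+2)).eval ((n:ℝ)+3/2) / ((n:ℝ)+3/2+m+1) := by
    rw [eq_div_iff (by positivity)]
    have t := ascPochhammer_succ_eval (m+1) ((n:ℝ)+3/2)
    push_cast at t
    linear_combination -t
  have h12 : (ascPochhammer ℝ (m+1)).eval ((n:ℝ)+1+3/2)
      = (ascPochhammer ℝ (m+2)).eval ((n:ℝ)+3/2) / ((n:ℝ)+3/2) := by
    rw [eq_div_iff (by positivity)]
    have t := pe_left (m+1) ((n:ℝ)+3/2)
    rw [show ((n:ℝ)+3/2+1) = (n:ℝ)+1+3/2 by ring] at t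
    linear_combination -t
  have t1 := pe_left (m+2) ((n:ℝ)+3/2)
  rw [show ((n:ℝ)+3/2+1) = (n:ℝ)+1+3/2 by ring] at t1
  have t2 := ascPochhammer_succ_eval (m+2) ((n:ℝ)+3/2)
  push_cast at t2
  have h13 : (ascPochhammer ℝ (m+2)).eval ((n:ℝ)+1+3/2)
      = (ascPochhammer ℝ (m+2)).eval ((n:ℝ)+3/2) * ((n:ℝ)+3/2+m+2) / ((n:ℝ)+3/2) := by
    rw [eq_div_iff (by positivity)]
    linear_combination t2 - t1
  have t3 := pe_left (m+1) ((n:ℝ)+1+3/2)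
  rw [show ((n:ℝ)+1+3/2+1) = (n:ℝ)+2+3/2 by ring] at t3
  have h14 : (ascPochhammer ℝ (m+1)).eval ((n:ℝ)+2+3/2)
      = (ascPochhammer ℝ (m+2)).eval ((n:ℝ)+3/2) * ((n:ℝ)+3/2+m+2)
        / (((n:ℝ)+3/2) * ((n:ℝ)+1+3/2)) := by
    rw [eq_div_iff (by positivity)]
    linear_combination t2 - t1 - ((n:ℝ)+3/2) * t3
  -- W family d = (n+2)/4
  have h15 : (ascPochhammer ℝ (m+1)).eval (((n:ℝ)+1+1)/4)
      = (ascPochhammer ℝ (m+2)).eval (((n:ℝ)+1+1)/4) / (((n:ℝ)+1+1)/4+m+1) := by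
    rw [eq_div_iff (by positivity)]
    have t := ascPochhammer_succ_eval (m+1) (((n:ℝ)+1+1)/4)
    push_cast at t
    linear_combination -t
  have h16 : (ascPochhammer ℝ (m+1)).eval (((n:ℝ)+1+5)/4)
      = (ascPochhammer ℝ (m+2)).eval (((n:ℝ)+1+1)/4) / (((n:ℝ)+1+1)/4) := by
    rw [eq_div_iff (by positivity)]
    have t := pe_left (m+1) (((n:ℝ)+1+1)/4)
    rw [show (((n:ℝ)+1+1)/4+1) = ((n:ℝ)+1+5)/4 by ring] at t
    linear_combination -t
  have h17 : (ascPochhammer ℝ (m+2)).eval (((n:ℝ)+1+5)/4)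
      = (ascPochhammer ℝ (m+2)).eval (((n:ℝ)+1+1)/4) * (((n:ℝ)+1+1)/4+m+2)
        / (((n:ℝ)+1+1)/4) := by
    rw [eq_div_iff (by positivity)]
    have s1 := pe_left (m+2) (((n:ℝ)+1+1)/4)
    rw [show (((n:ℝ)+1+1)/4+1) = ((n:ℝ)+1+5)/4 by ring] at s1
    have s2 := ascPochhammer_succ_eval (m+2) (((n:ℝ)+1+1)/4)
    push_cast at s2
    linear_combination s2 - s1
  have hD0 : (ascPochhammer ℝ (m+2)).eval ((n:ℝ)+3/2) ≠ 0 :=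
    ne_of_gt (ascPochhammer_pos _ _ (by positivity))
  have hW0 : (ascPochhammer ℝ (m+2)).eval (((n:ℝ)+1+1)/4) ≠ 0 :=
    ne_of_gt (ascPochhammer_pos _ _ (by positivity))
  have hf : ((m.factorial : ℝ)) ≠ 0 := Nat.cast_ne_zero.2 m.factorial_ne_zero
  have hne1 : ((n:ℝ)+3/2) ≠ 0 := by positivity
  have hne2 : ((n:ℝ)+1+3/2) ≠ 0 := by positivity
  have hne3 : ((n:ℝ)+3/2+m) ≠ 0 := by positivity
  have hne4 : ((n:ℝ)+3/2+m+1) ≠ 0 := by positivity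
  have hne5 : (((n:ℝ)+1+1)/4) ≠ 0 := by positivity
  have hne6 : (((n:ℝ)+1+1)/4+m+1) ≠ 0 := by positivity
  have hne7 : (2*(n:ℝ)+3) ≠ 0 := by positivity
  have hne8 : (2*(n:ℝ)+5) ≠ 0 := by positivity
  have hm1 : ((m:ℝ)+1) ≠ 0 := by positivity
  have hm2 : ((m:ℝ)+2) ≠ 0 := by positivity
  simp only [Aco, Bco]
  push_cast
  rw [h1, h2a, h2b, h3, h4, h5, h6, h7, h8, h9, h10, h11, h12, h13, h14, h15, h16, h17]
  have hfact1 : (((m+1).factorial : ℕ) : ℝ) = ((m:ℝ)+1) * (m.factorial : ℝ) := by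
    rw [Nat.factorial_succ]; push_cast; ring
  have hfact2 : (((m+2).factorial : ℕ) : ℝ)
      = ((m:ℝ)+2) * (((m:ℝ)+1) * (m.factorial : ℝ)) := by
    rw [show m+2 = (m+1)+1 from rfl, Nat.factorial_succ, Nat.factorial_succ]
    push_cast; ring
  rw [hfact1, hfact2]
  set U := (ascPochhammer ℝ m).eval (-(n:ℝ)/2) with hsU
  set V := (ascPochhammer ℝ m).eval (-((n:ℝ)-1)/2) with hsV
  set D := (ascPochhammer ℝ (m+2)).eval ((n:ℝ)+3/2) with hsD
  set W := (ascPochhammer ℝ (m+2)).eval (((n:ℝ)+1+1)/4) with hsW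
  set f := ((m.factorial : ℕ) : ℝ) with hsf
  field_simp
  ring

lemma Aco_vanish (n k : ℕ) (h : n + 1 ≤ k) : Aco n k = 0 := by
  rcases Nat.even_or_odd n with ⟨t, ht⟩ | ⟨t, ht⟩
  · have h1 : (-(n : ℝ) / 2) = -(t : ℝ) := by subst ht; push_cast; ring
    have h2 : (ascPochhammer ℝ k).eval (-(n : ℝ) / 2) = 0 := by
      rw [h1]; exact ascPochhammer_eval_neg_coe_nat_of_lt (by omega)
    simp only [Aco]; rw [h2]; ring
  · have h1 : (-((n : ℝ) - 1) / 2) = -(t : ℝ) := by subst ht; push_cast; ring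
    have h2 : (ascPochhammer ℝ k).eval (-((n : ℝ) - 1) / 2) = 0 := by
      rw [h1]; exact ascPochhammer_eval_neg_coe_nat_of_lt (by omega)
    simp only [Aco]; rw [h2]; ring

lemma Bco_vanish (n k : ℕ) (h : n + 1 ≤ k) : Bco n k = 0 := by
  rcases Nat.even_or_odd n with ⟨t, ht⟩ | ⟨t, ht⟩
  · have h1 : (-(n : ℝ) / 2) = -(t : ℝ) := by subst ht; push_cast; ring
    have h2 : (ascPochhammer ℝ k).eval (-(n : ℝ) / 2) = 0 := by
      rw [h1]; exact ascPochhammer_eval_neg_coe_nat_of_lt (by omega)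
    simp only [Bco]; rw [h2]; ring
  · have h1 : (-((n : ℝ) + 1) / 2) = -((t + 1 : ℕ) : ℝ) := by subst ht; push_cast; ring
    have h2 : (ascPochhammer ℝ k).eval (-((n : ℝ) + 1) / 2) = 0 := by
      rw [h1]; exact ascPochhammer_eval_neg_coe_nat_of_lt (by omega)
    simp only [Bco]; rw [h2]; ring

lemma sum_extend {M M' : ℕ} (h : M ≤ M') (f : ℕ → ℝ) (x : ℝ)
    (h0 : ∀ k, M ≤ k → f k = 0) :
    ∑ k ∈ Finset.range M, f k * x ^ k = ∑ k ∈ Finset.range M', f k * x ^ k := by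
  apply Finset.sum_subset (Finset.range_subset_range.2 h)
  intro k _ hk'
  rw [h0 k (by simpa using hk')]
  simp

lemma sum_shift (M : ℕ) (f : ℕ → ℝ) (x : ℝ) :
    x * ∑ k ∈ Finset.range M, f k * x ^ k
      = ∑ k ∈ Finset.range (M + 1), (if k = 0 then 0 else f (k - 1)) * x ^ k := by
  rw [Finset.sum_range_succ', Finset.mul_sum]
  simp only [Nat.succ_ne_zero, if_false, Nat.add_sub_cancel, if_true, eq_self_iff_true,
    pow_zero, zero_mul, add_zero, mul_one]
  exact Finset.sum_congr rfl fun k _ => by ring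

end Aux

/-- The contiguous relation `3(3n+4)(3n+7)/((2n+3)(2n+5)) x φ_{n+2}(x)
= (3x+1) ψ_{n+1}(x) - (x-1)² φ_n(x)`. -/
theorem phi_psi_relation (n : ℕ) (x : ℝ) :
    3 * (3 * (n : ℝ) + 4) * (3 * (n : ℝ) + 7) / ((2 * (n : ℝ) + 3) * (2 * (n : ℝ) + 5)) *
        x * phiHyp (n + 2) x
      = (3 * x + 1) * psiHyp (n + 1) x - (x - 1) ^ 2 * phiHyp n x := by
  have e_phi2 : phiHyp (n + 2) x = ∑ k ∈ Finset.range (n + 4), Aco (n + 2) k * x ^ k := by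
    rw [show n + 4 = (n + 2) + 2 by omega]; rfl
  have e_psi : psiHyp (n + 1) x = ∑ k ∈ Finset.range (n + 3), Bco (n + 1) k * x ^ k := by
    rw [show n + 3 = (n + 1) + 2 by omega]; rfl
  have e_phi : phiHyp n x = ∑ k ∈ Finset.range (n + 2), Aco n k * x ^ k := rfl
  set C : ℝ := 3 * (3 * (n : ℝ) + 4) * (3 * (n : ℝ) + 7)
      / ((2 * (n : ℝ) + 3) * (2 * (n : ℝ) + 5)) with hC
  have L : C * x * phiHyp (n + 2) x
      = ∑ k ∈ Finset.range (n + 5),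
          (C * (if k = 0 then 0 else Aco (n + 2) (k - 1))) * x ^ k := by
    rw [e_phi2, mul_assoc, sum_shift, show n + 4 + 1 = n + 5 by omega, Finset.mul_sum]
    exact Finset.sum_congr rfl fun k _ => by ring
  have hpsi5 : psiHyp (n + 1) x = ∑ k ∈ Finset.range (n + 5), Bco (n + 1) k * x ^ k := by
    rw [e_psi]
    exact sum_extend (by omega) _ x fun k hk => Bco_vanish _ _ (by omega)
  have hxpsi : x * psiHyp (n + 1) x
      = ∑ k ∈ Finset.range (n + 5), (if k = 0 then 0 else Bco (n + 1) (k - 1)) * x ^ k := by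
    rw [e_psi, sum_extend (show n + 3 ≤ n + 4 by omega) _ x
        (fun k hk => Bco_vanish _ _ (by omega)),
      sum_shift, show n + 4 + 1 = n + 5 by omega]
  have hphi5 : phiHyp n x = ∑ k ∈ Finset.range (n + 5), Aco n k * x ^ k := by
    rw [e_phi]
    exact sum_extend (by omega) _ x fun k hk => Aco_vanish _ _ (by omega)
  have hxphi : x * phiHyp n x
      = ∑ k ∈ Finset.range (n + 5), (if k = 0 then 0 else Aco n (k - 1)) * x ^ k := by
    rw [e_phi, sum_extend (show n + 2 ≤ n + 4 by omega) _ x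
        (fun k hk => Aco_vanish _ _ (by omega)),
      sum_shift, show n + 4 + 1 = n + 5 by omega]
  have hxxphi : x * (x * phiHyp n x)
      = ∑ k ∈ Finset.range (n + 5),
          (if k = 0 then 0 else
            (if k - 1 = 0 then 0 else Aco n (k - 1 - 1))) * x ^ k := by
    rw [e_phi, sum_extend (show n + 2 ≤ n + 3 by omega) _ x
        (fun k hk => Aco_vanish _ _ (by omega)),
      sum_shift, show n + 3 + 1 = n + 4 by omega,
      sum_shift, show n + 4 + 1 = n + 5 by omega]
  have expand : (3 * x + 1) * psiHyp (n + 1) x - (x - 1) ^ 2 * phiHyp n x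
      = 3 * (x * psiHyp (n + 1) x) + psiHyp (n + 1) x
        - (x * (x * phiHyp n x) - 2 * (x * phiHyp n x) + phiHyp n x) := by ring
  rw [show (3 * (3 * (n : ℝ) + 4) * (3 * (n : ℝ) + 7)
      / ((2 * (n : ℝ) + 3) * (2 * (n : ℝ) + 5)) * x * phiHyp (n + 2) x) = C * x * phiHyp (n+2) x
      from rfl, L, expand, hxpsi, hpsi5, hxxphi, hxphi, hphi5, Finset.mul_sum, Finset.mul_sum]
  simp only [Finset.mul_sum, ← Finset.sum_add_distrib, ← Finset.sum_sub_distrib]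
  refine Finset.sum_congr rfl fun k _ => ?_
  match k with
  | 0 =>
    have hA0 : Aco n 0 = 1 := by norm_num [Aco]
    have hB0 : Bco (n + 1) 0 = 1 := by norm_num [Bco]
    simp [hA0, hB0]
  | 1 =>
    norm_num
    have hA20 : Aco (n + 2) 0 = 1 := by norm_num [Aco]
    have hB0 : Bco (n + 1) 0 = 1 := by norm_num [Bco]
    have hA0 : Aco n 0 = 1 := by norm_num [Aco]
    have hn : (0:ℝ) ≤ (n:ℝ) := Nat.cast_nonneg n
    have hA1 : Aco n 1 = (-(n:ℝ)/2) * (-((n:ℝ)-1)/2) / ((n:ℝ) + 3/2) := by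
      simp [Aco, ascPochhammer_one]
    have hB1 : Bco (n + 1) 1
        = (-((n:ℝ)+1)/2) * (-((n:ℝ)+1+1)/2) * (((n:ℝ)+1+5)/4)
          / (((n:ℝ)+1+3/2) * (((n:ℝ)+1+1)/4)) := by
      simp [Bco, ascPochhammer_one]
    rw [hA20, hB0, hA0, hA1, hB1, hC]
    have h1 : ((n:ℝ) + 3/2) ≠ 0 := by positivity
    have h2 : ((n:ℝ) + 1 + 3/2) ≠ 0 := by positivity
    have h3 : (((n:ℝ) + 1 + 1)/4) ≠ 0 := by positivity
    have h4 : (2*(n:ℝ) + 3) ≠ 0 := by positivity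
    have h5 : (2*(n:ℝ) + 5) ≠ 0 := by positivity
    field_simp
    ring
  | (m + 2) =>
    simp only [show m + 2 - 1 = m + 1 by omega, show m + 1 - 1 = m by omega,
      if_neg (show ¬(m + 2 = 0) by omega), if_neg (show ¬(m + 1 = 0) by omega)]
    have := keylem n m
    have goal : C * Aco (n + 2) (m + 1)
        = 3 * Bco (n + 1) (m + 1) + Bco (n + 1) (m + 2)
          - (Aco n m - 2 * Aco n (m + 1) + Aco n (m + 2)) := by
      rw [hC]; linarith [keylem n m]
    rw [goal]; ring
end

section
/- Define φ_n(x) = ₂F₁(−n/2, −(n−1)/2; n+3/2; x) and ψ_n(x) = ₃F₂(−n/2, −(n+1)/2, (n+5)/4; n+3/2, (n+1)/4; x). Then for all n ≥ 0, 3(3n+5)(3n+8)/((2n+3)(2n+5)) · x · ψ_{n+2}(x) = (3x+1)²·φ_{n+1}(x) − (x−1)²·ψ_n(x). -/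
open Finset

/-!
Both sides are polynomials in `x`, so it suffices to compare the coefficients of `x ^ j`.
Every coefficient involved (of `φ_{n+1}`, `ψ_n` and `ψ_{n+2}`) is a rational function of `n`
and `j` times the single term `(-n/2)_j (-(n+1)/2)_j / ((n+3/2)_j j!)`, by the shift rule
`(a + 1)_j = (a)_j (a + j) / a`; after cancelling that term the coefficient identity is an
identity of rational functions.
-/

open Polynomial

section Pochhammer

variable {S : Type*} [CommSemiring S]

theorem ascPochhammer_eval_succ_left (a : S) (k : ℕ) :
    (ascPochhammer S (k + 1)).eval a = a * (ascPochhammer S k).eval (a + 1) := by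
  simp [ascPochhammer_succ_left, eval_comp]

theorem ascPochhammer_eval_add_one_mul (a : S) (k : ℕ) :
    (ascPochhammer S k).eval (a + 1) * a = (ascPochhammer S k).eval a * (a + k) := by
  rw [mul_comm, ← ascPochhammer_eval_succ_left, ascPochhammer_succ_eval]

theorem ascPochhammer_eval_add_one {F : Type*} [Field F] {a : F} (ha : a ≠ 0) (k : ℕ) :
    (ascPochhammer F k).eval (a + 1) = (ascPochhammer F k).eval a * (a + k) / a := by
  rw [eq_div_iff ha, ascPochhammer_eval_add_one_mul]

end Pochhammer

theorem coeff_sum_range_C_mul_X_pow {R : Type*} [Semiring R] {c : ℕ → R} {N : ℕ}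
    (hc : ∀ k, N ≤ k → c k = 0) (j : ℕ) :
    (∑ k ∈ range N, C (c k) * X ^ k).coeff j = c j := by
  simp only [finsetSum_coeff, coeff_C_mul_X_pow, sum_ite_eq]
  split_ifs with h
  · rfl
  · exact (hc j (by simpa using h)).symm

noncomputable def phiCoeff (m : ℝ) (k : ℕ) : ℝ :=
  ((ascPochhammer ℝ k).eval (-m / 2) * (ascPochhammer ℝ k).eval (-(m - 1) / 2))
    / ((ascPochhammer ℝ k).eval (m + 3 / 2) * (k.factorial : ℝ))

noncomputable def psiCoeff (m : ℝ) (k : ℕ) : ℝ :=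
  ((ascPochhammer ℝ k).eval (-m / 2) * (ascPochhammer ℝ k).eval (-(m + 1) / 2) *
      (ascPochhammer ℝ k).eval ((m + 5) / 4))
    / ((ascPochhammer ℝ k).eval (m + 3 / 2) *
        (ascPochhammer ℝ k).eval ((m + 1) / 4) * (k.factorial : ℝ))

theorem phiCoeff_succ (m : ℝ) (k : ℕ) :
    phiCoeff m (k + 1) = phiCoeff m k *
      ((-m / 2 + k) * (-(m - 1) / 2 + k) / ((m + 3 / 2 + k) * (k + 1))) := by
  simp only [phiCoeff, ascPochhammer_succ_eval, Nat.factorial_succ]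
  push_cast
  rw [div_mul_div_comm]
  congr 1 <;> ring

theorem psiCoeff_succ (m : ℝ) (k : ℕ) :
    psiCoeff m (k + 1) = psiCoeff m k *
      ((-m / 2 + k) * (-(m + 1) / 2 + k) * ((m + 5) / 4 + k) /
        ((m + 3 / 2 + k) * ((m + 1) / 4 + k) * (k + 1))) := by
  simp only [psiCoeff, ascPochhammer_succ_eval, Nat.factorial_succ]
  push_cast
  rw [div_mul_div_comm]
  congr 1 <;> ring

theorem phiCoeff_natCast_eq_zero {n k : ℕ} (h : n / 2 < k) : phiCoeff n k = 0 := by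
  obtain ⟨t, rfl | rfl⟩ := Nat.even_or_odd' n
  · have : -((2 * t : ℕ) : ℝ) / 2 = -(t : ℝ) := by push_cast; ring
    rw [phiCoeff, this, ascPochhammer_eval_neg_coe_nat_of_lt (by omega)]
    simp
  · have : -(((2 * t + 1 : ℕ) : ℝ) - 1) / 2 = -(t : ℝ) := by push_cast; ring
    rw [phiCoeff, this, ascPochhammer_eval_neg_coe_nat_of_lt (by omega)]
    simp

theorem psiCoeff_natCast_eq_zero {n k : ℕ} (h : (n + 1) / 2 < k) : psiCoeff n k = 0 := by
  obtain ⟨t, rfl | rfl⟩ := Nat.even_or_odd' n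
  · have : -((2 * t : ℕ) : ℝ) / 2 = -(t : ℝ) := by push_cast; ring
    rw [psiCoeff, this, ascPochhammer_eval_neg_coe_nat_of_lt (by omega)]
    simp
  · have : -(((2 * t + 1 : ℕ) : ℝ) + 1) / 2 = -((t + 1 : ℕ) : ℝ) := by push_cast; ring
    rw [psiCoeff, this, ascPochhammer_eval_neg_coe_nat_of_lt (by omega)]
    simp

noncomputable def phiPoly (n : ℕ) : ℝ[X] := ∑ k ∈ range (n + 2), C (phiCoeff n k) * X ^ k

noncomputable def psiPoly (n : ℕ) : ℝ[X] := ∑ k ∈ range (n + 2), C (psiCoeff n k) * X ^ k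

theorem coeff_phiPoly (n k : ℕ) : (phiPoly n).coeff k = phiCoeff n k :=
  coeff_sum_range_C_mul_X_pow (fun _ hk ↦ phiCoeff_natCast_eq_zero (by omega)) k

theorem coeff_psiPoly (n k : ℕ) : (psiPoly n).coeff k = psiCoeff n k :=
  coeff_sum_range_C_mul_X_pow (fun _ hk ↦ psiCoeff_natCast_eq_zero (by omega)) k

theorem eval_phiPoly (n : ℕ) (x : ℝ) : (phiPoly n).eval x = phiHyp n x := by
  simp [phiPoly, phiHyp, eval_finsetSum, phiCoeff]

theorem eval_psiPoly (n : ℕ) (x : ℝ) : (psiPoly n).eval x = psiHyp n x := by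
  simp [psiPoly, psiHyp, eval_finsetSum, psiCoeff]

noncomputable def commonCoeff (r : ℝ) (k : ℕ) : ℝ :=
  (ascPochhammer ℝ k).eval (-r / 2) * (ascPochhammer ℝ k).eval (-(r + 1) / 2)
    / ((ascPochhammer ℝ k).eval (r + 3 / 2) * (k.factorial : ℝ))

section Coefficients

variable {r : ℝ}

theorem phiCoeff_add_one_eq_commonCoeff_mul (hr : 0 ≤ r) (k : ℕ) :
    phiCoeff (r + 1) k = commonCoeff r k * ((r + 3 / 2) / (r + 3 / 2 + k)) := by
  have hc : 0 < (ascPochhammer ℝ k).eval (r + 3 / 2) := ascPochhammer_pos k _ (by positivity)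
  rw [phiCoeff, show r + 1 + 3 / 2 = r + 3 / 2 + 1 by ring,
    ascPochhammer_eval_add_one (by positivity), show -(r + 1 - 1) / 2 = -r / 2 by ring,
    commonCoeff]
  field_simp

theorem psiCoeff_eq_commonCoeff_mul (hr : 0 ≤ r) (k : ℕ) :
    psiCoeff r k = commonCoeff r k * (((r + 1) / 4 + k) / ((r + 1) / 4)) := by
  have hd : 0 < (ascPochhammer ℝ k).eval ((r + 1) / 4) := ascPochhammer_pos k _ (by positivity)
  rw [psiCoeff, show (r + 5) / 4 = (r + 1) / 4 + 1 by ring,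
    ascPochhammer_eval_add_one (by positivity), commonCoeff]
  field_simp

theorem psiCoeff_add_two_succ_eq_commonCoeff_mul (hr : 0 ≤ r) (k : ℕ) :
    psiCoeff (r + 2) (k + 1) = commonCoeff r k *
      ((r + 2) * (r + 3) / 4 * ((r + 3) / 4 + k + 1) * (r + 3 / 2) * (r + 5 / 2) /
        ((r + 3) / 4 * (r + 3 / 2 + k) * (r + 5 / 2 + k) * (r + 7 / 2 + k) * (k + 1))) := by
  have hc : 0 < (ascPochhammer ℝ k).eval (r + 3 / 2) := ascPochhammer_pos k _ (by positivity)
  have hd : 0 < (ascPochhammer ℝ k).eval ((r + 3) / 4) := ascPochhammer_pos k _ (by positivity)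
  rw [psiCoeff, ascPochhammer_eval_succ_left (-(r + 2) / 2),
    ascPochhammer_eval_succ_left (-(r + 2 + 1) / 2),
    show -(r + 2) / 2 + 1 = -r / 2 by ring, show -(r + 2 + 1) / 2 + 1 = -(r + 1) / 2 by ring,
    show (r + 2 + 5) / 4 = (r + 3) / 4 + 1 by ring, show (r + 2 + 1) / 4 = (r + 3) / 4 by ring,
    show r + 2 + 3 / 2 = r + 3 / 2 + 1 + 1 by ring,
    ascPochhammer_eval_add_one (a := (r + 3) / 4) (by positivity),
    ascPochhammer_eval_add_one (a := r + 3 / 2 + 1) (by positivity),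
    ascPochhammer_eval_add_one (a := r + 3 / 2) (by positivity), Nat.factorial_succ, commonCoeff]
  simp only [ascPochhammer_succ_eval]
  push_cast
  field_simp
  ring

theorem relation_coeff_zero : phiCoeff (r + 1) 0 - psiCoeff r 0 = 0 := by
  simp [phiCoeff, psiCoeff]

theorem relation_coeff_one (hr : 0 ≤ r) :
    phiCoeff (r + 1) 1 + 6 * phiCoeff (r + 1) 0 - (psiCoeff r 1 - 2 * psiCoeff r 0) =
      3 * (3 * r + 5) * (3 * r + 8) / ((2 * r + 3) * (2 * r + 5)) * psiCoeff (r + 2) 0 := by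
  simp only [phiCoeff, psiCoeff, ascPochhammer_zero, ascPochhammer_one, eval_one, eval_X,
    Nat.factorial_zero, Nat.factorial_one, Nat.cast_one]
  field_simp
  ring

theorem relation_coeff_add_two (hr : 0 ≤ r) (k : ℕ) :
    phiCoeff (r + 1) (k + 2) + 6 * phiCoeff (r + 1) (k + 1) + 9 * phiCoeff (r + 1) k
        - (psiCoeff r (k + 2) - 2 * psiCoeff r (k + 1) + psiCoeff r k) =
      3 * (3 * r + 5) * (3 * r + 8) / ((2 * r + 3) * (2 * r + 5)) * psiCoeff (r + 2) (k + 1) := by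
  rw [phiCoeff_succ _ (k + 1), phiCoeff_succ, psiCoeff_succ _ (k + 1), psiCoeff_succ,
    phiCoeff_add_one_eq_commonCoeff_mul hr, psiCoeff_eq_commonCoeff_mul hr,
    psiCoeff_add_two_succ_eq_commonCoeff_mul hr]
  push_cast
  field_simp
  ring

end Coefficients

/-- The contiguous relation `3(3n+5)(3n+8)/((2n+3)(2n+5)) x ψ_{n+2}(x)
= (3x+1)² φ_{n+1}(x) - (x-1)² ψ_n(x)`. -/
theorem psi_phi_relation (n : ℕ) (x : ℝ) :
    3 * (3 * (n : ℝ) + 5) * (3 * (n : ℝ) + 8) / ((2 * (n : ℝ) + 3) * (2 * (n : ℝ) + 5)) *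
        x * psiHyp (n + 2) x
      = (3 * x + 1) ^ 2 * phiHyp (n + 1) x - (x - 1) ^ 2 * psiHyp n x := by
  set c : ℝ := 3 * (3 * (n : ℝ) + 5) * (3 * (n : ℝ) + 8) / ((2 * (n : ℝ) + 3) * (2 * (n : ℝ) + 5))
  have hn : (0 : ℝ) ≤ n := n.cast_nonneg
  -- both sides expanded in powers of `X`, so that `coeff_X_mul` reads off each coefficient
  have key : X * (C c * psiPoly (n + 2)) = (phiPoly (n + 1) - psiPoly n)
      + X * (6 * phiPoly (n + 1) + 2 * psiPoly n) + X * (X * (9 * phiPoly (n + 1) - psiPoly n)) := by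
    ext (_ | _ | k) <;>
      simp only [coeff_add, coeff_sub, coeff_X_mul, coeff_X_mul_zero, coeff_C_mul, coeff_ofNat_mul,
        coeff_phiPoly, coeff_psiPoly, Nat.cast_add, Nat.cast_ofNat, Nat.cast_one]
    · simp [relation_coeff_zero]
    · linear_combination (relation_coeff_one hn).symm
    · linear_combination (relation_coeff_add_two hn k).symm
  have hx := congrArg (eval x) key
  simp only [eval_add, eval_sub, eval_mul, eval_X, eval_C, eval_ofNat, eval_phiPoly,
    eval_psiPoly] at hx
  linear_combination hx
end

section
/- Let χ(t_1,…,t_k; t_{k+1},…,t_n) be the quotient of det(X_{ij}) by the product ∏_{i=1}^k t_i^{−k}(1−t_i²)·∏_{i=k+1}^n t_i^{1−n+k}·∏(t_i−t_j)(1−t_i t_j) (product over pairs i<j within each group), where X_{ij} = t_i^{−(j+⌊(j−1)/2⌋)} − t_i^{j+⌊(j−1)/2⌋} for 1 ≤ i ≤ k; X_{ij} = ±(t_i^{−j−⌊(j−1)/2⌋} + t_i^{j+⌊(j−1)/2⌋}) for k+1 ≤ i ≤ n with sign + for j odd and − for j even. Then χ(−t_1,…,−t_k; −t_{k+1},…,−t_n)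 = ε·χ(t_1,…,t_k; t_{k+1},…,t_n) where ε = −1 if n ≡ 2k+1 mod 4 and ε = +1 otherwise. -/
open Finset

/-- The exponent `m = j + ⌊(j-1)/2⌋` for the (0-based) column index `j`. -/
def chiExp (j : ℕ) : ℤ := (j : ℤ) + 1 + (j / 2 : ℕ)

/-- The matrix `X_{ij}` defining the generalized character `χ`. -/
noncomputable def chiMat (n k : ℕ) (t : Fin n → ℂ) : Matrix (Fin n) (Fin n) ℂ :=
  Matrix.of fun i j =>
    if (i : ℕ) < k then t i ^ (-(chiExp (j : ℕ))) - t i ^ (chiExp (j : ℕ))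
    else if (j : ℕ) % 2 = 0 then t i ^ (-(chiExp (j : ℕ))) + t i ^ (chiExp (j : ℕ))
    else -(t i ^ (-(chiExp (j : ℕ))) + t i ^ (chiExp (j : ℕ)))

/-- The denominator
`∏_{i≤k} t_i^{-k}(1-t_i²) ∏_{i>k} t_i^{1-n+k} ∏ (t_i - t_j)(1 - t_i t_j)`,
the last product over pairs `i<j` within each group. -/
noncomputable def chiDen (n k : ℕ) (t : Fin n → ℂ) : ℂ :=
  (∏ i : Fin n,
      if (i : ℕ) < k then t i ^ (-(k : ℤ)) * (1 - t i ^ 2)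
      else t i ^ ((1 : ℤ) - (n : ℤ) + (k : ℤ))) *
  ∏ p ∈ Finset.univ.filter (fun p : Fin n × Fin n =>
      p.1 < p.2 ∧ (((p.1 : ℕ) < k ∧ (p.2 : ℕ) < k) ∨ (k ≤ (p.1 : ℕ) ∧ k ≤ (p.2 : ℕ)))),
    (t p.1 - t p.2) * (1 - t p.1 * t p.2)

/-- The generalized symplectic/orthogonal character
`χ(t_1,…,t_k; t_{k+1},…,t_n)`. -/
noncomputable def chiFun (n k : ℕ) (t : Fin n → ℂ) : ℂ :=
  (chiMat n k t).det / chiDen n k t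

/-! ### Auxiliary lemmas -/

lemma negone_zpow_neg (e : ℤ) : (-1:ℂ)^(-e) = (-1:ℂ)^e := by
  rcases Int.even_or_odd e with h | h
  · rw [h.neg_one_zpow, (h.neg).neg_one_zpow]
  · rw [h.neg_one_zpow, (h.neg).neg_one_zpow]

lemma prod_negone_zpow {α : Type*} (s : Finset α) (f : α → ℤ) :
    (∏ i ∈ s, (-1:ℂ)^(f i)) = (-1:ℂ)^(∑ i ∈ s, f i) := by
  induction s using Finset.cons_induction with
  | empty => simp
  | cons a s ha ih =>
      rw [Finset.prod_cons, Finset.sum_cons, ih,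
        ← zpow_add₀ (by norm_num : (-1:ℂ) ≠ 0)]

lemma negone_zpow_emod (e : ℤ) : (-1:ℂ)^e = (-1:ℂ)^(e % 2) := by
  conv_lhs => rw [← Int.emod_add_mul_ediv e 2]
  rw [zpow_add₀ (by norm_num : (-1:ℂ) ≠ 0), zpow_mul]
  norm_num

lemma neg_zpow' (x : ℂ) (e : ℤ) : (-x)^e = (-1:ℂ)^e * x^e := by
  rw [show -x = (-1)*x by ring, mul_zpow]

lemma T_mod : ∀ m : ℕ, (∑ i ∈ range m, i) % 2 = if m % 4 ≤ 1 then 0 else 1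
  | 0 => by simp
  | 1 => by simp
  | 2 => by simp [Finset.sum_range_succ]
  | 3 => by norm_num [Finset.sum_range_succ]
  | (m+4) => by
      have ih := T_mod m
      rw [sum_range_succ, sum_range_succ, sum_range_succ, sum_range_succ]
      split_ifs at ih ⊢ <;> omega

lemma chiExp4 (n : ℕ) : chiExp n + chiExp (n+1) + chiExp (n+2) + chiExp (n+3)
    = 6*(n:ℤ) + 12 := by
  simp only [chiExp]; push_cast; omega

lemma sumExp_mod : ∀ n : ℕ, (∑ j ∈ range n, chiExp j) % 2 = if n % 4 = 0 then 0 else 1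
  | 0 => by simp
  | 1 => by norm_num [Finset.sum_range_succ, chiExp]
  | 2 => by norm_num [Finset.sum_range_succ, chiExp]
  | 3 => by norm_num [Finset.sum_range_succ, chiExp]
  | (n+4) => by
      have ih := sumExp_mod n
      rw [sum_range_succ, sum_range_succ, sum_range_succ, sum_range_succ]
      have h4 := chiExp4 n
      generalize hS : (∑ j ∈ range n, chiExp j) = S at ih ⊢
      rw [show S + chiExp n + chiExp (n+1) + chiExp (n+2) + chiExp (n+3)
            = S + (chiExp n + chiExp (n+1) + chiExp (n+2) + chiExp (n+3)) by ring, h4]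
      split_ifs at ih ⊢ <;> omega

lemma card_pairs (n k : ℕ) (hk : k ≤ n) :
    (Finset.univ.filter (fun p : Fin n × Fin n =>
      p.1 < p.2 ∧ (((p.1 : ℕ) < k ∧ (p.2 : ℕ) < k) ∨ (k ≤ (p.1 : ℕ) ∧ k ≤ (p.2 : ℕ))))).card
    = (∑ i ∈ range k, i) + (∑ i ∈ range (n-k), i) := by
  rw [Finset.card_filter, Fintype.sum_prod_type]
  have step1 : ∀ i : Fin n,
      (∑ j : Fin n, if (i < j ∧ (((i : ℕ) < k ∧ (j : ℕ) < k) ∨ (k ≤ (i : ℕ) ∧ k ≤ (j : ℕ))))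
        then (1:ℕ) else 0)
      = (if (i:ℕ) < k then k - 1 - (i:ℕ) else n - 1 - (i:ℕ)) := by
    intro i
    simp only [Fin.lt_def]
    rw [Fin.sum_univ_eq_sum_range
      (fun x => if ((i:ℕ) < x ∧ (((i : ℕ) < k ∧ x < k) ∨ (k ≤ (i : ℕ) ∧ k ≤ x))) then (1:ℕ) else 0)]
    rw [← Finset.card_filter]
    by_cases hik : (i:ℕ) < k
    · have h : (range n).filter
          (fun x => ((i:ℕ) < x ∧ (((i : ℕ) < k ∧ x < k) ∨ (k ≤ (i : ℕ) ∧ k ≤ x))))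
          = Finset.Ico ((i:ℕ)+1) k := by
        ext x; simp only [Finset.mem_filter, Finset.mem_range, Finset.mem_Ico]
        constructor
        · rintro ⟨hx, hlt, h⟩; omega
        · intro h; exact ⟨by omega, by omega, Or.inl ⟨hik, by omega⟩⟩
      rw [h, Nat.card_Ico, if_pos hik]; omega
    · have hin : (i:ℕ) < n := i.isLt
      have h : (range n).filter
          (fun x => ((i:ℕ) < x ∧ (((i : ℕ) < k ∧ x < k) ∨ (k ≤ (i : ℕ) ∧ k ≤ x))))
          = Finset.Ico ((i:ℕ)+1) n := by
        ext x; simp only [Finset.mem_filter, Finset.mem_range, Finset.mem_Ico]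
        constructor
        · rintro ⟨hx, hlt, h⟩; omega
        · intro h; exact ⟨by omega, by omega, Or.inr ⟨by omega, by omega⟩⟩
      rw [h, Nat.card_Ico, if_neg hik]; omega
  rw [Finset.sum_congr rfl (fun i _ => step1 i)]
  rw [Fin.sum_univ_eq_sum_range (fun x => if x < k then k - 1 - x else n - 1 - x)]
  have hsplit : (∑ x ∈ range n, (if x < k then k - 1 - x else n - 1 - x))
      = (∑ x ∈ range k, (if x < k then k - 1 - x else n - 1 - x))
        + ∑ x ∈ Ico k n, (if x < k then k - 1 - x else n - 1 - x) := by
    rw [Finset.range_eq_Ico, ← Finset.sum_Ico_consecutive _ (Nat.zero_le k) hk,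
      ← Finset.range_eq_Ico]
  rw [hsplit]
  congr 1
  · rw [Finset.sum_congr rfl (fun x hx => if_pos (Finset.mem_range.mp hx))]
    exact Finset.sum_range_reflect (fun x => x) k
  · rw [Finset.sum_Ico_eq_sum_range]
    have h2 : ∀ x ∈ range (n-k),
        (if k + x < k then k - 1 - (k + x) else n - 1 - (k + x)) = (n-k) - 1 - x := by
      intro x hx; rw [Finset.mem_range] at hx; rw [if_neg (by omega)]; omega
    rw [Finset.sum_congr rfl h2]
    exact Finset.sum_range_reflect (fun x => x) (n-k)

lemma det_neg (n k : ℕ) (t : Fin n → ℂ) :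
    (chiMat n k (fun i => -(t i))).det
      = (-1:ℂ) ^ (∑ j ∈ range n, chiExp j) * (chiMat n k t).det := by
  have h : chiMat n k (fun i => -(t i)) =
      Matrix.of (fun i j : Fin n => (-1:ℂ)^(chiExp (j:ℕ)) * chiMat n k t i j) := by
    ext i j
    simp only [chiMat, Matrix.of_apply]
    split_ifs with h1 h2 <;>
      rw [neg_zpow' (t i) (-(chiExp (j:ℕ))), neg_zpow' (t i) (chiExp (j:ℕ)),
        negone_zpow_neg] <;> ring
  rw [h, Matrix.det_mul_row]
  congr 1
  rw [prod_negone_zpow, Fin.sum_univ_eq_sum_range (fun j => chiExp j)]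

lemma den_neg (n k : ℕ) (hk : k ≤ n) (t : Fin n → ℂ) :
    chiDen n k (fun i => -(t i))
      = (-1:ℂ) ^ ((∑ x ∈ range n, (if x < k then (k:ℤ) else 1 - (n:ℤ) + k))
            + (((∑ i ∈ range k, i) + (∑ i ∈ range (n-k), i) : ℕ) : ℤ))
          * chiDen n k t := by
  simp only [chiDen]
  have h1 : (∏ i : Fin n, if (i:ℕ) < k then (-(t i))^(-(k:ℤ)) * (1 - (-(t i))^2)
        else (-(t i))^((1:ℤ)-(n:ℤ)+(k:ℤ)))
      = (-1:ℂ)^(∑ x ∈ range n, (if x < k then (k:ℤ) else 1 - (n:ℤ) + k))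
        * ∏ i : Fin n, (if (i:ℕ) < k then (t i)^(-(k:ℤ)) * (1 - (t i)^2)
            else (t i)^((1:ℤ)-(n:ℤ)+(k:ℤ))) := by
    have : ∀ i : Fin n, (if (i:ℕ) < k then (-(t i))^(-(k:ℤ)) * (1 - (-(t i))^2)
          else (-(t i))^((1:ℤ)-(n:ℤ)+(k:ℤ)))
        = (-1:ℂ)^(if (i:ℕ) < k then (k:ℤ) else 1 - (n:ℤ) + k)
          * (if (i:ℕ) < k then (t i)^(-(k:ℤ)) * (1 - (t i)^2)
            else (t i)^((1:ℤ)-(n:ℤ)+(k:ℤ))) := by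
      intro i
      by_cases hik : (i:ℕ) < k
      · simp only [if_pos hik]
        rw [neg_zpow' (t i) (-(k:ℤ)), negone_zpow_neg, neg_sq]
        ring
      · simp only [if_neg hik]
        rw [neg_zpow' (t i) ((1:ℤ)-(n:ℤ)+(k:ℤ))]
    rw [Finset.prod_congr rfl (fun i _ => this i), Finset.prod_mul_distrib]
    congr 1
    rw [prod_negone_zpow,
      Fin.sum_univ_eq_sum_range (fun x => if x < k then (k:ℤ) else 1 - (n:ℤ) + k)]
  have h2 : (∏ p ∈ Finset.univ.filter (fun p : Fin n × Fin n =>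
        p.1 < p.2 ∧ (((p.1 : ℕ) < k ∧ (p.2 : ℕ) < k) ∨ (k ≤ (p.1 : ℕ) ∧ k ≤ (p.2 : ℕ)))),
        ((-(t p.1)) - (-(t p.2))) * (1 - (-(t p.1)) * (-(t p.2))))
      = (-1:ℂ)^(((∑ i ∈ range k, i) + (∑ i ∈ range (n-k), i) : ℕ))
        * ∏ p ∈ Finset.univ.filter (fun p : Fin n × Fin n =>
            p.1 < p.2 ∧ (((p.1 : ℕ) < k ∧ (p.2 : ℕ) < k) ∨ (k ≤ (p.1 : ℕ) ∧ k ≤ (p.2 : ℕ)))),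
          (t p.1 - t p.2) * (1 - t p.1 * t p.2) := by
    rw [← card_pairs n k hk, ← Finset.prod_const, ← Finset.prod_mul_distrib]
    exact Finset.prod_congr rfl (fun p _ => by ring)
  rw [h1, h2]
  rw [zpow_add₀ (by norm_num : (-1:ℂ) ≠ 0), zpow_natCast]
  ring

lemma parity_arith (n k : ℕ) (hk : k ≤ n) (A B : ℤ) (c1 c2 : ℕ)
    (hA : A % 2 = if n % 4 = 0 then 0 else 1)
    (hB : B % 2 = (k:ℤ) % 2)
    (h1 : c1 % 2 = if k % 4 ≤ 1 then 0 else 1)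
    (h2 : c2 % 2 = if (n-k) % 4 ≤ 1 then 0 else 1) :
    (A - (B + ((c1 + c2 : ℕ) : ℤ))) % 2 = if n % 4 = (2*k+1) % 4 then 1 else 0 := by
  split_ifs at hA h1 h2 ⊢ <;> omega

lemma sum_ite_eval (n k : ℕ) (hk : k ≤ n) :
    (∑ x ∈ range n, (if x < k then (k:ℤ) else 1 - (n:ℤ) + k))
      = (k:ℤ)*k + ((n:ℤ)-k)*(1-(n:ℤ)+k) := by
  rw [Finset.range_eq_Ico, ← Finset.sum_Ico_consecutive _ (Nat.zero_le k) hk,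
    ← Finset.range_eq_Ico]
  congr 1
  · rw [Finset.sum_congr rfl (fun x hx => if_pos (Finset.mem_range.mp hx)),
      Finset.sum_const, Finset.card_range, nsmul_eq_mul]
  · have : ∀ x ∈ Ico k n, (if x < k then (k:ℤ) else 1 - (n:ℤ) + k) = 1 - (n:ℤ) + k := by
      intro x hx
      rw [Finset.mem_Ico] at hx
      rw [if_neg (by omega)]
    rw [Finset.sum_congr rfl this, Finset.sum_const, Nat.card_Ico, nsmul_eq_mul]
    congr 1
    push_cast [Nat.cast_sub hk]
    ring

lemma sign_eval (n k : ℕ) (hk : k ≤ n) :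
    (-1:ℂ) ^ ((∑ j ∈ range n, chiExp j)
        - ((∑ x ∈ range n, (if x < k then (k:ℤ) else 1 - (n:ℤ) + k))
            + (((∑ i ∈ range k, i) + (∑ i ∈ range (n-k), i) : ℕ) : ℤ)))
      = if n % 4 = (2*k+1) % 4 then (-1:ℂ) else 1 := by
  have hA := sumExp_mod n
  have h1 := T_mod k
  have h2 := T_mod (n-k)
  have hBmod : ((k:ℤ)*k + ((n:ℤ)-k)*(1-(n:ℤ)+k)) % 2 = (k:ℤ) % 2 := by
    have e1 : Even ((k:ℤ)*k - k) := by
      have h : (k:ℤ)*k - k = ((k:ℤ)-1)*(((k:ℤ)-1)+1) := by ring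
      rw [h]; exact Int.even_mul_succ_self _
    have e2 : Even (((n:ℤ)-k)*(1-(n:ℤ)+k)) := by
      have h : ((n:ℤ)-k)*(1-(n:ℤ)+k) = -((((n:ℤ)-(k:ℤ)-1))*((((n:ℤ)-(k:ℤ)-1))+1)) := by ring
      rw [h]; exact (Int.even_mul_succ_self _).neg
    obtain ⟨a, ha⟩ := e1; obtain ⟨b, hb⟩ := e2
    omega
  rw [sum_ite_eval n k hk]
  rw [negone_zpow_emod]
  rw [parity_arith n k hk _ _ _ _ hA hBmod h1 h2]
  split_ifs <;> norm_num

/-- Parity transformation: replacing each `t_i` by `-t_i` multiplies `χ` by `-1`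
exactly when `n ≡ 2k+1 (mod 4)`. -/
theorem chi_parity (n k : ℕ) (hk : k ≤ n) (t : Fin n → ℂ) (hD : chiDen n k t ≠ 0) :
    chiFun n k (fun i => -(t i)) =
      (if n % 4 = (2 * k + 1) % 4 then (-1 : ℂ) else 1) * chiFun n k t := by
  simp only [chiFun]
  rw [det_neg n k t, den_neg n k hk t]
  rw [mul_div_mul_comm]
  rw [← zpow_sub₀ (by norm_num : (-1:ℂ) ≠ 0)]
  rw [sign_eval n k hk]
end
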